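/- Let w₀, x₀, y₀, z₀ be complex numbers with (w₀²z₀² − x₀²y₀²)(w₀²x₀² − y₀²z₀²)(w₀²y₀² − x₀²z₀²) ≠ 0, and let A, B, C, D be given by A = (w₀⁴ − x₀⁴ − y₀⁴ + z₀⁴)/(w₀²z₀² − x₀²y₀²), B = (w₀⁴ + x₀⁴ − y₀⁴ − z₀⁴)/(w₀²x₀² − y₀²z₀²), C = (w₀⁴ − x₀⁴ + y₀⁴ − z₀⁴)/(w₀²y₀² − x₀²z₀²), D = w₀x₀y₀z₀·∏_{ε,ε'∈{±1}}(w₀² + εx₀² + ε'y₀² + εε'z₀²)/((w₀²z₀² − x₀²y₀²)(w₀²x₀² − y₀²z₀²)(w₀²y₀² − x₀²z₀²)). Let F(w,x,y,z) = w⁴ + x⁴ + y⁴ + z⁴ + 2Dwxyz − A(w²z² + x²y²) − B(w²x² + y²z²) − C(w²y² + x²z²). Then each of the sixteen points obtained from (w₀, x₀, y₀, z₀) by applying one of the four coordinate permutations (w₀,x₀,y₀,z₀), (x₀,w₀,z₀,y₀), (y₀,z₀,w₀,x₀), (z₀,y₀,x₀,w₀), followed by one of the four sign changes (+,+,+,+),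 (−,−,+,+), (−,+,−,+), (−,+,+,−), is a singular point of the quartic surface F = 0; that is, F and all four partial derivatives ∂F/∂w, ∂F/∂x, ∂F/∂y, ∂F/∂z vanish at each of these sixteen points. -/

import Mathlib

/-!
The point `(w₀, x₀, y₀, z₀)` is a node: once the denominators of `A, B, C, D` are cleared,
`F` and its four partials there become polynomial identities. The sixteen points form the orbit of
`(w₀, x₀, y₀, z₀)` under the group generated by the double transpositions of the coordinates and
the sign changes of two coordinates; `F` is invariant under this group, so its singular locus is too.
-/

/-- The Göpel–Hudson quartic polynomial. -/
def GH (A B C D w x y z : ℂ) : ℂ :=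
  w ^ 4 + x ^ 4 + y ^ 4 + z ^ 4 + 2 * D * w * x * y * z
    - A * (w ^ 2 * z ^ 2 + x ^ 2 * y ^ 2) - B * (w ^ 2 * x ^ 2 + y ^ 2 * z ^ 2)
    - C * (w ^ 2 * y ^ 2 + x ^ 2 * z ^ 2)

/-- `∂F/∂w`; the other three partials are its values at the coordinate permutations fixing `F`. -/
def dGH (A B C D w x y z : ℂ) : ℂ :=
  4 * w ^ 3 + 2 * D * x * y * z - 2 * w * (A * z ^ 2 + B * x ^ 2 + C * y ^ 2)

def IsNode (A B C D w x y z : ℂ) : Prop :=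
  GH A B C D w x y z = 0 ∧
    deriv (fun t => GH A B C D t x y z) w = 0 ∧
    deriv (fun t => GH A B C D w t y z) x = 0 ∧
    deriv (fun t => GH A B C D w x t z) y = 0 ∧
    deriv (fun t => GH A B C D w x y t) z = 0

section

variable (A B C D w x y z : ℂ)

theorem GH_swap_wx_yz : GH A B C D x w z y = GH A B C D w x y z := by
  simp only [GH]; ring

theorem GH_swap_wy_xz : GH A B C D y z w x = GH A B C D w x y z := by
  simp only [GH]; ring

theorem GH_swap_wz_xy : GH A B C D z y x w = GH A B C D w x y z := by
  simp only [GH]; ring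

theorem hasDerivAt_GH_w :
    HasDerivAt (fun t => GH A B C D t x y z) (dGH A B C D w x y z) w := by
  have h : (fun t => GH A B C D t x y z) = fun t => t ^ 4 + 2 * D * x * y * z * t
      - (A * z ^ 2 + B * x ^ 2 + C * y ^ 2) * t ^ 2 + GH A B C D 0 x y z := by
    funext t; simp only [GH]; ring
  rw [h]
  refine ((((hasDerivAt_pow 4 w).add ((hasDerivAt_id w).const_mul _)).sub
    ((hasDerivAt_pow 2 w).const_mul _)).add_const _).congr_deriv ?_
  simp only [dGH]; push_cast; ring

theorem deriv_GH_w : deriv (fun t => GH A B C D t x y z) w = dGH A B C D w x y z :=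
  (hasDerivAt_GH_w A B C D w x y z).deriv

theorem deriv_GH_x : deriv (fun t => GH A B C D w t y z) x = dGH A B C D x w z y := by
  simp only [← GH_swap_wx_yz A B C D w, deriv_GH_w]

theorem deriv_GH_y : deriv (fun t => GH A B C D w x t z) y = dGH A B C D y z w x := by
  simp only [← GH_swap_wy_xz A B C D w, deriv_GH_w]

theorem deriv_GH_z : deriv (fun t => GH A B C D w x y t) z = dGH A B C D z y x w := by
  simp only [← GH_swap_wz_xy A B C D w, deriv_GH_w]

theorem isNode_iff : IsNode A B C D w x y z ↔
    GH A B C D w x y z = 0 ∧ dGH A B C D w x y z = 0 ∧ dGH A B C D x w z y = 0 ∧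
      dGH A B C D y z w x = 0 ∧ dGH A B C D z y x w = 0 := by
  rw [IsNode, deriv_GH_w, deriv_GH_x, deriv_GH_y, deriv_GH_z]

end

namespace IsNode

variable {A B C D w x y z : ℂ}

theorem swap_wx_yz (h : IsNode A B C D w x y z) : IsNode A B C D x w z y := by
  obtain ⟨h₀, h₁, h₂, h₃, h₄⟩ := (isNode_iff ..).mp h
  exact (isNode_iff ..).mpr ⟨(GH_swap_wx_yz ..).trans h₀, h₂, h₁, h₄, h₃⟩

theorem swap_wy_xz (h : IsNode A B C D w x y z) : IsNode A B C D y z w x := by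
  obtain ⟨h₀, h₁, h₂, h₃, h₄⟩ := (isNode_iff ..).mp h
  exact (isNode_iff ..).mpr ⟨(GH_swap_wy_xz ..).trans h₀, h₃, h₄, h₁, h₂⟩

theorem swap_wz_xy (h : IsNode A B C D w x y z) : IsNode A B C D z y x w := by
  obtain ⟨h₀, h₁, h₂, h₃, h₄⟩ := (isNode_iff ..).mp h
  exact (isNode_iff ..).mpr ⟨(GH_swap_wz_xy ..).trans h₀, h₄, h₃, h₂, h₁⟩

theorem neg_wx (h : IsNode A B C D w x y z) : IsNode A B C D (-w) (-x) y z := by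
  obtain ⟨h₀, h₁, h₂, h₃, h₄⟩ := (isNode_iff ..).mp h
  rw [isNode_iff]
  simp only [GH, dGH] at h₀ h₁ h₂ h₃ h₄ ⊢
  exact ⟨by linear_combination h₀, by linear_combination -h₁, by linear_combination -h₂,
    by linear_combination h₃, by linear_combination h₄⟩

theorem neg_wy (h : IsNode A B C D w x y z) : IsNode A B C D (-w) x (-y) z := by
  obtain ⟨h₀, h₁, h₂, h₃, h₄⟩ := (isNode_iff ..).mp h
  rw [isNode_iff]
  simp only [GH, dGH] at h₀ h₁ h₂ h₃ h₄ ⊢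
  exact ⟨by linear_combination h₀, by linear_combination -h₁, by linear_combination h₂,
    by linear_combination -h₃, by linear_combination h₄⟩

theorem neg_wz (h : IsNode A B C D w x y z) : IsNode A B C D (-w) x y (-z) := by
  obtain ⟨h₀, h₁, h₂, h₃, h₄⟩ := (isNode_iff ..).mp h
  rw [isNode_iff]
  simp only [GH, dGH] at h₀ h₁ h₂ h₃ h₄ ⊢
  exact ⟨by linear_combination h₀, by linear_combination -h₁, by linear_combination h₂,
    by linear_combination h₃, by linear_combination -h₄⟩

end IsNode

theorem isNode_of_moduli {w₀ x₀ y₀ z₀ A B C D : ℂ}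
    (hden : (w₀ ^ 2 * z₀ ^ 2 - x₀ ^ 2 * y₀ ^ 2) * (w₀ ^ 2 * x₀ ^ 2 - y₀ ^ 2 * z₀ ^ 2) *
      (w₀ ^ 2 * y₀ ^ 2 - x₀ ^ 2 * z₀ ^ 2) ≠ 0)
    (hA : A = (w₀ ^ 4 - x₀ ^ 4 - y₀ ^ 4 + z₀ ^ 4) / (w₀ ^ 2 * z₀ ^ 2 - x₀ ^ 2 * y₀ ^ 2))
    (hB : B = (w₀ ^ 4 + x₀ ^ 4 - y₀ ^ 4 - z₀ ^ 4) / (w₀ ^ 2 * x₀ ^ 2 - y₀ ^ 2 * z₀ ^ 2))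
    (hC : C = (w₀ ^ 4 - x₀ ^ 4 + y₀ ^ 4 - z₀ ^ 4) / (w₀ ^ 2 * y₀ ^ 2 - x₀ ^ 2 * z₀ ^ 2))
    (hD : D = w₀ * x₀ * y₀ * z₀ *
        ((w₀ ^ 2 + x₀ ^ 2 + y₀ ^ 2 + z₀ ^ 2) * (w₀ ^ 2 + x₀ ^ 2 - y₀ ^ 2 - z₀ ^ 2) *
         (w₀ ^ 2 - x₀ ^ 2 + y₀ ^ 2 - z₀ ^ 2) * (w₀ ^ 2 - x₀ ^ 2 - y₀ ^ 2 + z₀ ^ 2)) /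
      ((w₀ ^ 2 * z₀ ^ 2 - x₀ ^ 2 * y₀ ^ 2) * (w₀ ^ 2 * x₀ ^ 2 - y₀ ^ 2 * z₀ ^ 2) *
       (w₀ ^ 2 * y₀ ^ 2 - x₀ ^ 2 * z₀ ^ 2))) :
    IsNode A B C D w₀ x₀ y₀ z₀ := by
  -- Named denominators stop `field_simp` from reordering them into forms it cannot see are nonzero.
  generalize ha : w₀ ^ 2 * z₀ ^ 2 - x₀ ^ 2 * y₀ ^ 2 = a at hden hA hD
  generalize hb : w₀ ^ 2 * x₀ ^ 2 - y₀ ^ 2 * z₀ ^ 2 = b at hden hB hD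
  generalize hc : w₀ ^ 2 * y₀ ^ 2 - x₀ ^ 2 * z₀ ^ 2 = c at hden hC hD
  obtain ⟨⟨ha₀, hb₀⟩, hc₀⟩ : (a ≠ 0 ∧ b ≠ 0) ∧ c ≠ 0 := by simpa only [mul_ne_zero_iff] using hden
  subst hA hB hC hD
  rw [isNode_iff]
  refine ⟨?_, ?_, ?_, ?_, ?_⟩ <;>
    · simp only [GH, dGH]
      field_simp
      subst ha hb hc
      ring

/-- The sixteen nodes of the Göpel–Hudson quartic with moduli parametrized by
`(w₀, x₀, y₀, z₀)`: the quartic and all four partial derivatives vanish at each of the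
sixteen points obtained from `(w₀, x₀, y₀, z₀)` by the four coordinate permutations and the
four sign changes. -/
theorem goepel_hudson_sixteen_nodes (w0 x0 y0 z0 A B C D : ℂ)
    (hden : (w0 ^ 2 * z0 ^ 2 - x0 ^ 2 * y0 ^ 2) * (w0 ^ 2 * x0 ^ 2 - y0 ^ 2 * z0 ^ 2) *
      (w0 ^ 2 * y0 ^ 2 - x0 ^ 2 * z0 ^ 2) ≠ 0)
    (hA : A = (w0 ^ 4 - x0 ^ 4 - y0 ^ 4 + z0 ^ 4) / (w0 ^ 2 * z0 ^ 2 - x0 ^ 2 * y0 ^ 2))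
    (hB : B = (w0 ^ 4 + x0 ^ 4 - y0 ^ 4 - z0 ^ 4) / (w0 ^ 2 * x0 ^ 2 - y0 ^ 2 * z0 ^ 2))
    (hC : C = (w0 ^ 4 - x0 ^ 4 + y0 ^ 4 - z0 ^ 4) / (w0 ^ 2 * y0 ^ 2 - x0 ^ 2 * z0 ^ 2))
    (hD : D = w0 * x0 * y0 * z0 *
        ((w0 ^ 2 + x0 ^ 2 + y0 ^ 2 + z0 ^ 2) * (w0 ^ 2 + x0 ^ 2 - y0 ^ 2 - z0 ^ 2) *
         (w0 ^ 2 - x0 ^ 2 + y0 ^ 2 - z0 ^ 2) * (w0 ^ 2 - x0 ^ 2 - y0 ^ 2 + z0 ^ 2)) /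
      ((w0 ^ 2 * z0 ^ 2 - x0 ^ 2 * y0 ^ 2) * (w0 ^ 2 * x0 ^ 2 - y0 ^ 2 * z0 ^ 2) *
       (w0 ^ 2 * y0 ^ 2 - x0 ^ 2 * z0 ^ 2))) :
    ∀ w x y z : ℂ,
      (w, x, y, z) ∈ ([(w0, x0, y0, z0), (-w0, -x0, y0, z0),
          (-w0, x0, -y0, z0), (-w0, x0, y0, -z0),
          (x0, w0, z0, y0), (-x0, -w0, z0, y0), (-x0, w0, -z0, y0), (-x0, w0, z0, -y0),
          (y0, z0, w0, x0), (-y0, -z0, w0, x0), (-y0, z0, -w0, x0), (-y0, z0, w0, -x0),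
          (z0, y0, x0, w0), (-z0, -y0, x0, w0), (-z0, y0, -x0, w0), (-z0, y0, x0, -w0)] :
        List (ℂ × ℂ × ℂ × ℂ)) →
      GH A B C D w x y z = 0 ∧
      deriv (fun t => GH A B C D t x y z) w = 0 ∧
      deriv (fun t => GH A B C D w t y z) x = 0 ∧
      deriv (fun t => GH A B C D w x t z) y = 0 ∧
      deriv (fun t => GH A B C D w x y t) z = 0 := by
  have h : IsNode A B C D w0 x0 y0 z0 := isNode_of_moduli hden hA hB hC hD
  intro w x y z hmem
  simp only [List.mem_cons, List.not_mem_nil, or_false] at hmem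
  rcases hmem with p | p | p | p | p | p | p | p | p | p | p | p | p | p | p | p <;> cases p
  exacts [h, h.neg_wx, h.neg_wy, h.neg_wz,
    h.swap_wx_yz, h.swap_wx_yz.neg_wx, h.swap_wx_yz.neg_wy, h.swap_wx_yz.neg_wz,
    h.swap_wy_xz, h.swap_wy_xz.neg_wx, h.swap_wy_xz.neg_wy, h.swap_wy_xz.neg_wz,
    h.swap_wz_xy, h.swap_wz_xy.neg_wx, h.swap_wz_xy.neg_wy, h.swap_wz_xy.neg_wz]
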